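/- Let T be large, let 1 ≤ k ≤ 2, and let s = 1/2 + it with t ∈ ℝ. Then |ζ(s)|^{2k−2} |ζ'(s)|² ≤ 2k |ζ(s)|² |ζ'(s)|² ∏_{2 ≤ j ≤ ℓ} |N_j(s; k−2)|² + (4 − 2k) |ζ'(s)|² ∏_{2 ≤ j ≤ ℓ} |N_j(s; k−1)|² + Σ_{2 ≤ v ≤ ℓ} ( 2k |ζ(s)|² |ζ'(s)|² ∏_{2 ≤ j < v} |N_j(s; k−2)|² + (4 − 2k) |ζ'(s)|² ∏_{2 ≤ j < v} |N_j(s; k−1)|² ) · |𝒫_v(s) / (50 P_v)|^{2⌈50 P_v⌉}. -/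

import Mathlib

set_option maxHeartbeats 1000000


open scoped Classical

/-- The `j`-fold iterated logarithm: `iterLog 0 x = x`, `iterLog (j+1) x = log (iterLog j x)`. -/
noncomputable def iterLog : ℕ → ℝ → ℝ
  | 0, x => x
  | n + 1, x => Real.log (iterLog n x)

/-- The sequence `T_j`: `T_1 = e^2` and `T_j = exp(log T / (log_j T)^2)` for `j ≥ 2`. -/
noncomputable def Tseq (T : ℝ) (j : ℕ) : ℝ :=
  if j = 1 then Real.exp 2 else Real.exp (Real.log T / (iterLog j T) ^ 2)

/-- A prime `p` lies in the range `[T_{j-1}, T_j)`. -/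
def InRange (T : ℝ) (j : ℕ) (p : ℕ) : Prop :=
  Tseq T (j - 1) ≤ (p : ℝ) ∧ (p : ℝ) < Tseq T j

/-- `P_j = ∑_{T_{j-1} ≤ p < T_j} 1/p`, sum over primes. -/
noncomputable def Pv (T : ℝ) (j : ℕ) : ℝ :=
  ∑' p : ℕ, if p.Prime ∧ InRange T j p then (1 : ℝ) / p else 0

/-- `𝒫_j(s) = ∑_{T_{j-1} ≤ p < T_j} p^{-s}`, sum over primes. -/
noncomputable def Pcal (T : ℝ) (j : ℕ) (s : ℂ) : ℂ :=
  ∑' p : ℕ, if p.Prime ∧ InRange T j p then (p : ℂ) ^ (-s) else 0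

/-- `Ω(n)`: number of prime factors of `n` with multiplicity. -/
def Omega (n : ℕ) : ℕ := n.primeFactorsList.length

/-- The multiplicative function with `g(p^m) = 1/m!`. -/
noncomputable def gfun (n : ℕ) : ℝ :=
  ∏ p ∈ n.primeFactors, (1 : ℝ) / (Nat.factorial (n.factorization p))

/-- The Dirichlet polynomial `N_j(s; α) = ∑ α^{Ω(n)} g(n) n^{-s}` over `n ≥ 1` whose prime
factors all lie in `[T_{j-1}, T_j)` and with `Ω(n) ≤ 500 P_j`. -/
noncomputable def Ncal (T : ℝ) (j : ℕ) (s : ℂ) (α : ℂ) : ℂ :=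
  ∑' n : ℕ,
    if 1 ≤ n ∧ (∀ p : ℕ, p.Prime → p ∣ n → InRange T j p) ∧ (Omega n : ℝ) ≤ 500 * Pv T j
    then α ^ Omega n * (gfun n : ℂ) * (n : ℂ) ^ (-s) else 0

/-- `L` is the largest integer with `log_L T ≥ 10^4`. -/
def IsLargestIterLogIndex (T : ℝ) (L : ℕ) : Prop :=
  (10 ^ 4 : ℝ) ≤ iterLog L T ∧ ∀ m : ℕ, L < m → iterLog m T < 10 ^ 4

/-- Hardy's function `Z(t) = π^{-it/2} Γ(1/4 + it/2)/|Γ(1/4 + it/2)| · ζ(1/2 + it)`. -/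
noncomputable def hardyZ (t : ℝ) : ℂ :=
  (Real.pi : ℂ) ^ (-(Complex.I * (t : ℂ)) / 2) *
    (Complex.Gamma (1 / 4 + Complex.I * t / 2) /
      (‖Complex.Gamma (1 / 4 + Complex.I * t / 2)‖ : ℂ)) *
    riemannZeta (1 / 2 + Complex.I * t)

/-- `σ_{z₁,z₂}(n) = ∑_{ab = n} a^{-z₁} b^{-z₂}`. -/
noncomputable def sigmaz (z1 z2 : ℂ) (n : ℕ) : ℂ :=
  ∑ d ∈ n.divisors, (d : ℂ) ^ (-z1) * ((n / d : ℕ) : ℂ) ^ (-z2)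

/-- `B_{z₁,z₂,z₃,z₄}(n)`. -/
noncomputable def Bfun (z1 z2 z3 z4 : ℂ) (n : ℕ) : ℂ :=
  ∏ p ∈ n.primeFactors,
    (∑' j : ℕ, sigmaz z1 z2 (p ^ (j + n.factorization p)) * sigmaz z3 z4 (p ^ j) / (p : ℂ) ^ j) *
      (∑' j : ℕ, sigmaz z1 z2 (p ^ j) * sigmaz z3 z4 (p ^ j) / (p : ℂ) ^ j)⁻¹

/-- telescoping identity -/
lemma my_telescope (L : ℕ) (ε : ℕ → ℝ) :
    ∏ j ∈ Finset.Icc 2 L, (1 - ε j)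
      + ∑ v ∈ Finset.Icc 2 L, (∏ j ∈ Finset.Ico 2 v, (1 - ε j)) * ε v = 1 := by
  induction L with
  | zero => simp
  | succ L ih =>
    rcases Nat.lt_or_ge L 1 with hL | hL
    · interval_cases L <;> simp
    · have h2 : 2 ≤ L + 1 := by omega
      rw [← Finset.insert_Icc_right_eq_Icc_add_one h2, Finset.prod_insert (by simp),
        Finset.sum_insert (by simp), Finset.Ico_add_one_right_eq_Icc]
      ring_nf
      ring_nf at ih
      linarith [ih]

/-- AM-GM piece: `a^(2k-2) * ∏ n₁^(k-1) n₂^(2-k) ≤ (k-1) a² ∏n₁ + (2-k) ∏n₂`. -/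
lemma my_amgm (S : Finset ℕ) (a : ℝ) (ha : 0 ≤ a) (n₁ n₂ : ℕ → ℝ)
    (hn₁ : ∀ j, 0 ≤ n₁ j) (hn₂ : ∀ j, 0 ≤ n₂ j) (k : ℝ) (hk1 : 1 ≤ k) (hk2 : k ≤ 2) :
    a ^ (2 * k - 2) * ∏ j ∈ S, ((n₁ j) ^ (k - 1) * (n₂ j) ^ (2 - k)) ≤
      (k - 1) * (a ^ (2 : ℕ) * ∏ j ∈ S, n₁ j) + (2 - k) * ∏ j ∈ S, n₂ j := by
  have h1 : (0:ℝ) ≤ k - 1 := by linarith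
  have h2 : (0:ℝ) ≤ 2 - k := by linarith
  have hA : (0:ℝ) ≤ ∏ j ∈ S, n₁ j := Finset.prod_nonneg fun j _ => hn₁ j
  have hB : (0:ℝ) ≤ ∏ j ∈ S, n₂ j := Finset.prod_nonneg fun j _ => hn₂ j
  have hprod : ∏ j ∈ S, ((n₁ j) ^ (k - 1) * (n₂ j) ^ (2 - k))
      = (∏ j ∈ S, n₁ j) ^ (k - 1) * (∏ j ∈ S, n₂ j) ^ (2 - k) := by
    rw [Finset.prod_mul_distrib, Real.finset_prod_rpow S n₁ (fun j _ => hn₁ j),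
      Real.finset_prod_rpow S n₂ (fun j _ => hn₂ j)]
  rw [hprod]
  have ha2 : a ^ (2 * k - 2) = (a ^ (2:ℕ)) ^ (k - 1) := by
    rw [← Real.rpow_natCast a 2, ← Real.rpow_mul ha]
    norm_num; ring_nf
  rw [ha2]
  have key : (a ^ (2:ℕ) * ∏ j ∈ S, n₁ j) ^ (k-1) * (∏ j ∈ S, n₂ j) ^ (2-k) ≤
      (k - 1) * (a ^ (2:ℕ) * ∏ j ∈ S, n₁ j) + (2 - k) * ∏ j ∈ S, n₂ j :=
    Real.geom_mean_le_arith_mean2_weighted h1 h2 (by positivity) hB (by ring)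
  calc (a ^ (2:ℕ)) ^ (k - 1) * ((∏ j ∈ S, n₁ j) ^ (k - 1) * (∏ j ∈ S, n₂ j) ^ (2 - k))
      = (a ^ (2:ℕ) * ∏ j ∈ S, n₁ j) ^ (k-1) * (∏ j ∈ S, n₂ j) ^ (2-k) := by
        rw [Real.mul_rpow (by positivity) hA]; ring
    _ ≤ _ := key

lemma my_bump (X Y k : ℝ) (hX : 0 ≤ X) (hY : 0 ≤ Y) (hk1 : 1 ≤ k) (hk2 : k ≤ 2) :
    (k - 1) * X + (2 - k) * Y ≤ 2 * k * X + (4 - 2 * k) * Y := by nlinarith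

/-- main assembly -/
lemma my_assembly (L : ℕ) (a b : ℝ) (ha : 0 ≤ a) (hb : 0 ≤ b) (n₁ n₂ F : ℕ → ℝ)
    (hn₁ : ∀ j, 0 ≤ n₁ j) (hn₂ : ∀ j, 0 ≤ n₂ j) (hF : ∀ j, 0 ≤ F j)
    (k : ℝ) (hk1 : 1 ≤ k) (hk2 : k ≤ 2)
    (hkey : ∀ j, 2 ≤ j → j ≤ L → 1 - min (F j) 1 ≤ (n₁ j) ^ (k - 1) * (n₂ j) ^ (2 - k)) :
    a ^ (2 * k - 2) * b ^ (2:ℕ) ≤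
      2 * k * a ^ (2:ℕ) * b ^ (2:ℕ) * ∏ j ∈ Finset.Icc 2 L, n₁ j
      + (4 - 2 * k) * b ^ (2:ℕ) * ∏ j ∈ Finset.Icc 2 L, n₂ j
      + ∑ v ∈ Finset.Icc 2 L,
          (2 * k * a ^ (2:ℕ) * b ^ (2:ℕ) * ∏ j ∈ Finset.Ico 2 v, n₁ j
            + (4 - 2 * k) * b ^ (2:ℕ) * ∏ j ∈ Finset.Ico 2 v, n₂ j) * F v := by
  set ε : ℕ → ℝ := fun j => 1 - min ((n₁ j) ^ (k - 1) * (n₂ j) ^ (2 - k)) 1 with hε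
  have hεmem : ∀ j, 0 ≤ ε j ∧ ε j ≤ 1 := by
    intro j
    constructor
    · simp only [hε, sub_nonneg]; exact min_le_right _ _
    · have h0 : (0:ℝ) ≤ min ((n₁ j) ^ (k - 1) * (n₂ j) ^ (2 - k)) 1 :=
        le_min (mul_nonneg (Real.rpow_nonneg (hn₁ j) _) (Real.rpow_nonneg (hn₂ j) _))
          zero_le_one
      simp only [hε]; linarith
  have hratio : ∀ j, 1 - ε j ≤ (n₁ j) ^ (k - 1) * (n₂ j) ^ (2 - k) := by
    intro j; simp only [hε, sub_sub_cancel]; exact min_le_left _ _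
  have hεF : ∀ j, 2 ≤ j → j ≤ L → ε j ≤ F j := by
    intro j h2 hL
    have := hkey j h2 hL
    have h0 : ε j ≤ min (F j) 1 := by
      rcases le_or_gt ((n₁ j) ^ (k - 1) * (n₂ j) ^ (2 - k)) 1 with h | h
      · simp only [hε, min_eq_left h]; linarith
      · have he : ε j = 0 := by simp only [hε, min_eq_right (le_of_lt h), sub_self]
        rw [he]; exact le_min (hF j) zero_le_one
    exact h0.trans (min_le_left _ _)
  -- per-set bound
  have hS : ∀ S : Finset ℕ, a ^ (2*k-2) * ∏ j ∈ S, (1 - ε j) ≤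
      (k - 1) * (a ^ (2:ℕ) * ∏ j ∈ S, n₁ j) + (2 - k) * ∏ j ∈ S, n₂ j := by
    intro S
    refine le_trans ?_ (my_amgm S a ha n₁ n₂ hn₁ hn₂ k hk1 hk2)
    refine mul_le_mul_of_nonneg_left ?_ (Real.rpow_nonneg ha _)
    exact Finset.prod_le_prod (fun j _ => by linarith [(hεmem j).1, (hεmem j).2])
      (fun j _ => hratio j)
  have htele := my_telescope L ε
  have expand : a ^ (2*k-2) * b ^ (2:ℕ) =
      (a ^ (2*k-2) * ∏ j ∈ Finset.Icc 2 L, (1 - ε j)) * b ^ (2:ℕ)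
      + ∑ v ∈ Finset.Icc 2 L,
          ((a ^ (2*k-2) * ∏ j ∈ Finset.Ico 2 v, (1 - ε j)) * b ^ (2:ℕ)) * ε v := by
    calc a ^ (2*k-2) * b ^ (2:ℕ)
        = a ^ (2*k-2) * b ^ (2:ℕ) * (∏ j ∈ Finset.Icc 2 L, (1 - ε j)
            + ∑ v ∈ Finset.Icc 2 L, (∏ j ∈ Finset.Ico 2 v, (1 - ε j)) * ε v) := by
          rw [htele, mul_one]
      _ = _ := by
          rw [mul_add, Finset.mul_sum]
          congr 1
          · ring
          · exact Finset.sum_congr rfl fun v _ => by ring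
  rw [expand]
  have hb2 : (0:ℝ) ≤ b ^ (2:ℕ) := by positivity
  gcongr ?_ + ?_
  · -- main term
    calc (a ^ (2*k-2) * ∏ j ∈ Finset.Icc 2 L, (1 - ε j)) * b ^ (2:ℕ)
        ≤ ((k - 1) * (a ^ (2:ℕ) * ∏ j ∈ Finset.Icc 2 L, n₁ j)
            + (2 - k) * ∏ j ∈ Finset.Icc 2 L, n₂ j) * b ^ (2:ℕ) := by
          exact mul_le_mul_of_nonneg_right (hS _) hb2
      _ ≤ 2 * k * a ^ (2:ℕ) * b ^ (2:ℕ) * ∏ j ∈ Finset.Icc 2 L, n₁ j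
            + (4 - 2 * k) * b ^ (2:ℕ) * ∏ j ∈ Finset.Icc 2 L, n₂ j := by
          have h1 : (0:ℝ) ≤ a ^ (2:ℕ) * (∏ j ∈ Finset.Icc 2 L, n₁ j) * b ^ (2:ℕ) := by
            have := Finset.prod_nonneg (fun j (_ : j ∈ Finset.Icc 2 L) => hn₁ j); positivity
          have h2 : (0:ℝ) ≤ (∏ j ∈ Finset.Icc 2 L, n₂ j) * b ^ (2:ℕ) := by
            have := Finset.prod_nonneg (fun j (_ : j ∈ Finset.Icc 2 L) => hn₂ j); positivity
          calc ((k - 1) * (a ^ (2:ℕ) * ∏ j ∈ Finset.Icc 2 L, n₁ j)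
                + (2 - k) * ∏ j ∈ Finset.Icc 2 L, n₂ j) * b ^ (2:ℕ)
              = (k - 1) * (a ^ (2:ℕ) * (∏ j ∈ Finset.Icc 2 L, n₁ j) * b ^ (2:ℕ))
                + (2 - k) * ((∏ j ∈ Finset.Icc 2 L, n₂ j) * b ^ (2:ℕ)) := by ring
            _ ≤ 2 * k * (a ^ (2:ℕ) * (∏ j ∈ Finset.Icc 2 L, n₁ j) * b ^ (2:ℕ))
                + (4 - 2 * k) * ((∏ j ∈ Finset.Icc 2 L, n₂ j) * b ^ (2:ℕ)) :=
              my_bump _ _ k h1 h2 hk1 hk2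
            _ = _ := by ring
  · -- sum term
    refine Finset.sum_le_sum fun v hv => ?_
    obtain ⟨hv2, hvL⟩ := Finset.mem_Icc.mp hv
    have hFv := hεF v hv2 hvL
    have hterm : (a ^ (2*k-2) * ∏ j ∈ Finset.Ico 2 v, (1 - ε j)) * b ^ (2:ℕ) ≤
        2 * k * a ^ (2:ℕ) * b ^ (2:ℕ) * ∏ j ∈ Finset.Ico 2 v, n₁ j
          + (4 - 2 * k) * b ^ (2:ℕ) * ∏ j ∈ Finset.Ico 2 v, n₂ j := by
      calc (a ^ (2*k-2) * ∏ j ∈ Finset.Ico 2 v, (1 - ε j)) * b ^ (2:ℕ)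
          ≤ ((k - 1) * (a ^ (2:ℕ) * ∏ j ∈ Finset.Ico 2 v, n₁ j)
              + (2 - k) * ∏ j ∈ Finset.Ico 2 v, n₂ j) * b ^ (2:ℕ) :=
            mul_le_mul_of_nonneg_right (hS _) hb2
        _ ≤ _ := by
          have h1 : (0:ℝ) ≤ a ^ (2:ℕ) * (∏ j ∈ Finset.Ico 2 v, n₁ j) * b ^ (2:ℕ) := by
            have := Finset.prod_nonneg (fun j (_ : j ∈ Finset.Ico 2 v) => hn₁ j); positivity
          have h2 : (0:ℝ) ≤ (∏ j ∈ Finset.Ico 2 v, n₂ j) * b ^ (2:ℕ) := by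
            have := Finset.prod_nonneg (fun j (_ : j ∈ Finset.Ico 2 v) => hn₂ j); positivity
          calc ((k - 1) * (a ^ (2:ℕ) * ∏ j ∈ Finset.Ico 2 v, n₁ j)
                + (2 - k) * ∏ j ∈ Finset.Ico 2 v, n₂ j) * b ^ (2:ℕ)
              = (k - 1) * (a ^ (2:ℕ) * (∏ j ∈ Finset.Ico 2 v, n₁ j) * b ^ (2:ℕ))
                + (2 - k) * ((∏ j ∈ Finset.Ico 2 v, n₂ j) * b ^ (2:ℕ)) := by ring
            _ ≤ 2 * k * (a ^ (2:ℕ) * (∏ j ∈ Finset.Ico 2 v, n₁ j) * b ^ (2:ℕ))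
                + (4 - 2 * k) * ((∏ j ∈ Finset.Ico 2 v, n₂ j) * b ^ (2:ℕ)) :=
              my_bump _ _ k h1 h2 hk1 hk2
            _ = _ := by ring
    have hlhs_nonneg : (0:ℝ) ≤ (a ^ (2*k-2) * ∏ j ∈ Finset.Ico 2 v, (1 - ε j)) * b ^ (2:ℕ) := by
      have hp : (0:ℝ) ≤ ∏ j ∈ Finset.Ico 2 v, (1 - ε j) :=
        Finset.prod_nonneg fun j _ => by linarith [(hεmem j).2]
      have := Real.rpow_nonneg ha (2*k-2); positivity
    calc (a ^ (2*k-2) * ∏ j ∈ Finset.Ico 2 v, (1 - ε j)) * b ^ (2:ℕ) * ε v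
        ≤ (a ^ (2*k-2) * ∏ j ∈ Finset.Ico 2 v, (1 - ε j)) * b ^ (2:ℕ) * F v :=
          mul_le_mul_of_nonneg_left hFv hlhs_nonneg
      _ ≤ _ := mul_le_mul_of_nonneg_right hterm (hF v)

/-- `n^n ≤ e^n n!` -/
lemma my_fact_low : ∀ n : ℕ, (n:ℝ) ^ n ≤ Real.exp n * n.factorial := by
  intro n
  induction n with
  | zero => simp
  | succ n ih =>
    rcases Nat.eq_zero_or_pos n with rfl | hn
    · norm_num
    · have hn' : (0:ℝ) < n := by exact_mod_cast hn
      have h1 : ((n:ℝ) + 1) ^ n ≤ Real.exp 1 * (n:ℝ) ^ n := by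
        have : ((n:ℝ) + 1) = (n:ℝ) * (1 + 1/n) := by field_simp
        rw [this, mul_pow]
        have h2 : (1 + 1/(n:ℝ)) ^ n ≤ Real.exp 1 := by
          have h3 : (1 + 1/(n:ℝ)) ≤ Real.exp (1/n) := by
            have := Real.add_one_le_exp (1/(n:ℝ)); linarith
          calc (1 + 1/(n:ℝ)) ^ n ≤ Real.exp (1/n) ^ n := by
                apply pow_le_pow_left₀ (by positivity) h3
            _ = Real.exp ((n:ℕ) * (1/(n:ℝ))) := by rw [Real.exp_nat_mul]
            _ = Real.exp 1 := by rw [mul_one_div, div_self (ne_of_gt hn')]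
        calc (n:ℝ)^n * (1 + 1/(n:ℝ))^n ≤ (n:ℝ)^n * Real.exp 1 :=
              mul_le_mul_of_nonneg_left h2 (by positivity)
          _ = Real.exp 1 * (n:ℝ)^n := by ring
      have hstep : ((n:ℝ) + 1) ^ (n+1) ≤ Real.exp (n+1) * (n+1).factorial := by
        have e1 : ((n:ℝ) + 1) ^ (n+1) = ((n:ℝ)+1)^n * ((n:ℝ)+1) := by ring
        have e2 : Real.exp ((n:ℝ)+1) = Real.exp 1 * Real.exp n := by
          rw [← Real.exp_add]; ring_nf
        have e3 : (((n+1).factorial : ℕ):ℝ) = ((n:ℝ)+1) * n.factorial := by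
          rw [Nat.factorial_succ]; push_cast; ring
        rw [e1, e3]
        calc ((n:ℝ)+1)^n * ((n:ℝ)+1) ≤ (Real.exp 1 * (n:ℝ)^n) * ((n:ℝ)+1) :=
              mul_le_mul_of_nonneg_right h1 (by positivity)
          _ ≤ (Real.exp 1 * (Real.exp n * n.factorial)) * ((n:ℝ)+1) := by
              have := mul_le_mul_of_nonneg_left ih (le_of_lt (Real.exp_pos 1))
              exact mul_le_mul_of_nonneg_right this (by positivity)
          _ = Real.exp ((n:ℝ)+1) * (((n:ℝ)+1) * n.factorial) := by rw [e2]; ring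
      calc ((n+1:ℕ):ℝ) ^ (n+1) = ((n:ℝ)+1)^(n+1) := by push_cast; ring
        _ ≤ Real.exp (n+1) * (n+1).factorial := hstep
        _ = Real.exp ((n+1:ℕ):ℝ) * (n+1).factorial := by push_cast; ring_nf

/-- tail bound for the exponential series -/
lemma my_exp_tail (w : ℂ) (M : ℕ) (hw : ‖w‖ ≤ (M+1)/10) :
    ‖Complex.exp w - ∑ i ∈ Finset.range (M+1), w ^ i / i.factorial‖
      ≤ (10/9) * (‖w‖) ^ (M+1) / (M+1).factorial := by
  have hsum : Summable (fun i : ℕ => w ^ i / (i.factorial : ℂ)) :=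
    NormedSpace.expSeries_div_summable w
  have hexp : Complex.exp w = ∑' i : ℕ, w ^ i / (i.factorial : ℂ) := by
    rw [Complex.exp_eq_exp_ℂ, NormedSpace.exp_eq_tsum_div]
  have htail : Complex.exp w - ∑ i ∈ Finset.range (M+1), w ^ i / i.factorial
      = ∑' i : ℕ, w ^ (i + (M+1)) / ((i + (M+1)).factorial : ℂ) := by
    rw [hexp, ← hsum.sum_add_tsum_nat_add (M+1)]; ring
  rw [htail]
  set r := ‖w‖ with hr
  have hr0 : 0 ≤ r := norm_nonneg w
  have hbound : ∀ i : ℕ, ‖w ^ (i + (M+1)) / ((i + (M+1)).factorial : ℂ)‖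
      ≤ (r ^ (M+1) / (M+1).factorial) * (1/10) ^ i := by
    intro i
    have h1 : ‖w ^ (i + (M+1)) / ((i + (M+1)).factorial : ℂ)‖
        = r ^ (i + (M+1)) / ((i + (M+1)).factorial : ℝ) := by
      rw [norm_div, norm_pow]
      congr 1
      rw [Complex.norm_natCast]
    rw [h1]
    have hfact : ((M+1).factorial : ℝ) * ((M+1):ℝ) ^ i ≤ ((i + (M+1)).factorial : ℝ) := by
      have h2 : (M+1).factorial * (M+2) ^ i ≤ ((M+1) + i).factorial :=
        Nat.factorial_mul_pow_le_factorial
      have h3 : ((M+1):ℕ) ^ i ≤ (M+2) ^ i := Nat.pow_le_pow_left (by omega) i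
      have : (M+1).factorial * ((M+1):ℕ) ^ i ≤ ((i + (M+1)).factorial) := by
        rw [Nat.add_comm i (M+1)]
        exact le_trans (Nat.mul_le_mul_left _ h3) h2
      exact_mod_cast this
    have hnum : r ^ (i + (M+1)) ≤ r ^ (M+1) * (((M+1):ℝ)/10) ^ i := by
      rw [pow_add, mul_comm]
      apply mul_le_mul_of_nonneg_left _ (pow_nonneg hr0 _)
      exact pow_le_pow_left₀ hr0 hw i
    have hdenpos : (0:ℝ) < ((i + (M+1)).factorial : ℝ) := by positivity
    have hden2pos : (0:ℝ) < ((M+1).factorial : ℝ) * ((M+1):ℝ) ^ i := by positivity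
    calc r ^ (i + (M+1)) / ((i + (M+1)).factorial : ℝ)
        ≤ (r ^ (M+1) * (((M+1):ℝ)/10) ^ i) / (((M+1).factorial : ℝ) * ((M+1):ℝ) ^ i) :=
          div_le_div₀ (by positivity) hnum hden2pos hfact
      _ = (r ^ (M+1) / (M+1).factorial) * (1/10) ^ i := by
          rw [div_pow]
          have hMne : ((M:ℝ)+1) ^ i ≠ 0 := by positivity
          have hfne : ((M+1).factorial : ℝ) ≠ 0 := by positivity
          field_simp
          rw [mul_assoc, ← mul_pow]; norm_num
  have hgsum : Summable (fun i : ℕ => (r ^ (M+1) / (M+1).factorial) * (1/10 : ℝ) ^ i) :=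
    (summable_geometric_of_lt_one (by norm_num) (by norm_num)).mul_left _
  have habs : Summable (fun i : ℕ => ‖w ^ (i + (M+1)) / ((i + (M+1)).factorial : ℂ)‖) := by
    apply Summable.of_nonneg_of_le (fun i => norm_nonneg _) hbound hgsum
  have hbound' : ∀ i : ℕ, ‖w ^ (i + (M+1)) / ((i + (M+1)).factorial : ℂ)‖
      ≤ (r ^ (M+1) / (M+1).factorial) * (1/10) ^ i := by
    intro i; exact hbound i
  have habs' : Summable (fun i : ℕ => ‖w ^ (i + (M+1)) / ((i + (M+1)).factorial : ℂ)‖) :=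
    Summable.of_nonneg_of_le (fun i => norm_nonneg _) hbound' hgsum
  calc ‖∑' i : ℕ, w ^ (i + (M+1)) / ((i + (M+1)).factorial : ℂ)‖
      ≤ ∑' i : ℕ, ‖w ^ (i + (M+1)) / ((i + (M+1)).factorial : ℂ)‖ :=
        norm_tsum_le_tsum_norm habs'
    _ ≤ ∑' i : ℕ, (r ^ (M+1) / (M+1).factorial) * (1/10 : ℝ) ^ i :=
        Summable.tsum_le_tsum hbound' habs' hgsum
    _ = (r ^ (M+1) / (M+1).factorial) * (10/9) := by
        rw [tsum_mul_left, tsum_geometric_of_lt_one (by norm_num) (by norm_num)]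
        norm_num
    _ = (10/9) * r ^ (M+1) / (M+1).factorial := by ring

lemma my_perj (P : ℝ) (hP : 0 ≤ P) (z : ℂ) (k : ℝ) (hk1 : 1 ≤ k) (hk2 : k ≤ 2) :
    1 - min ((‖z‖ / (50 * P)) ^ (2 * ⌈50 * P⌉₊)) 1 ≤
      (‖∑ i ∈ Finset.range (⌊500 * P⌋₊ + 1),
          (((k - 2 : ℝ) : ℂ) * z) ^ i / i.factorial‖ ^ (2:ℕ)) ^ (k - 1) *
      (‖∑ i ∈ Finset.range (⌊500 * P⌋₊ + 1),
          (((k - 1 : ℝ) : ℂ) * z) ^ i / i.factorial‖ ^ (2:ℕ)) ^ (2 - k) := by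
  have hk1' : (0:ℝ) ≤ k - 1 := by linarith
  have hk2' : (0:ℝ) ≤ 2 - k := by linarith
  set M := ⌊500 * P⌋₊ with hM
  set m := ⌈50 * P⌉₊ with hm
  set r := ‖z‖ with hrdef
  have hr0 : 0 ≤ r := norm_nonneg z
  set N₁ := ∑ i ∈ Finset.range (M + 1), (((k - 2 : ℝ) : ℂ) * z) ^ i / i.factorial with hN₁def
  set N₂ := ∑ i ∈ Finset.range (M + 1), (((k - 1 : ℝ) : ℂ) * z) ^ i / i.factorial with hN₂def
  have hRHS0 : (0:ℝ) ≤ (‖N₁‖ ^ (2:ℕ)) ^ (k-1) * (‖N₂‖ ^ (2:ℕ)) ^ (2-k) :=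
    mul_nonneg (Real.rpow_nonneg (by positivity) _) (Real.rpow_nonneg (by positivity) _)
  rcases le_or_gt 1 ((r / (50 * P)) ^ (2 * m)) with hF | hF
  · rw [min_eq_right hF]
    simpa using hRHS0
  · rw [min_eq_left (le_of_lt hF)]
    rcases Nat.eq_zero_or_pos M with hM0 | hM1
    · have h1 : N₁ = 1 := by
        rw [hN₁def, hM0]; simp
      have h2 : N₂ = 1 := by
        rw [hN₂def, hM0]; simp
      rw [h1, h2]
      simp only [norm_one, one_pow, Real.one_rpow, mul_one]
      have : (0:ℝ) ≤ (r / (50 * P)) ^ (2 * m) := by positivity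
      linarith
    · -- main case
      have h500 : (1:ℝ) ≤ 500 * P := Nat.floor_pos.mp hM1
      have hPpos : (0:ℝ) < P := by linarith
      have h50pos : (0:ℝ) < 50 * P := by linarith
      have hm1 : 1 ≤ m := Nat.ceil_pos.mpr (by linarith)
      have hρ0 : (0:ℝ) ≤ r / (50 * P) := by positivity
      have hρlt : r / (50 * P) < 1 := by
        by_contra h
        push_neg at h
        have h2 := pow_le_pow_left₀ (zero_le_one) h (2*m)
        simp only [one_pow] at h2
        linarith
      have hr50 : r < 50 * P := (div_lt_one h50pos).mp hρlt
      have hM500 : 500 * P < (M:ℝ) + 1 := Nat.lt_floor_add_one _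
      have hrM : r ≤ ((M:ℝ) + 1) / 10 := by linarith
      set η := (10/9) * Real.exp r * r ^ (M+1) / ((M+1).factorial : ℝ) with hηdef
      have hη0 : 0 ≤ η := by positivity
      have hfactpos : (0:ℝ) < ((M+1).factorial : ℝ) := by positivity
      -- Step A
      have hN : ∀ α : ℝ, |α| ≤ 1 →
          Real.exp (α * z.re) * (1 - η) ≤
            ‖∑ i ∈ Finset.range (M + 1), ((α:ℂ) * z) ^ i / i.factorial‖ := by
        intro α hα
        set w := (α:ℂ) * z with hwdef
        set S := ∑ i ∈ Finset.range (M + 1), w ^ i / (i.factorial : ℂ) with hSdef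
        have habsw : ‖w‖ = |α| * r := by
          rw [hwdef, norm_mul, Complex.norm_real, Real.norm_eq_abs]
        have hwle : ‖w‖ ≤ r := by
          rw [habsw]
          calc |α| * r ≤ 1 * r := mul_le_mul_of_nonneg_right hα hr0
            _ = r := one_mul r
        have hw10 : ‖w‖ ≤ ((M:ℝ)+1)/10 := hwle.trans hrM
        have hE : ‖Complex.exp w - S‖ ≤ (10/9) * r ^ (M+1) / (M+1).factorial := by
          refine (my_exp_tail w M hw10).trans (by gcongr)
        have habsexp : ‖Complex.exp w‖ = Real.exp (α * z.re) := by
          rw [Complex.norm_exp]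
          congr 1
          rw [hwdef]
          simp [Complex.mul_re]
        have htri : ‖Complex.exp w‖ - ‖Complex.exp w - S‖
            ≤ ‖S‖ := by
          have h := norm_sub_norm_le (Complex.exp w) (Complex.exp w - S)
          simpa using h
        have hcomp : (10/9) * r ^ (M+1) / ((M+1).factorial : ℝ)
            ≤ Real.exp (α * z.re) * η := by
          have hre : -r ≤ α * z.re := by
            have h1 : |α * z.re| ≤ r := by
              rw [abs_mul]
              calc |α| * |z.re| ≤ 1 * |z.re| :=
                    mul_le_mul_of_nonneg_right hα (abs_nonneg _)
                _ = |z.re| := one_mul _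
                _ ≤ r := Complex.abs_re_le_norm z
            linarith [neg_abs_le (α * z.re)]
          have h1 : (1:ℝ) ≤ Real.exp (α * z.re) * Real.exp r := by
            rw [← Real.exp_add]
            exact Real.one_le_exp (by linarith)
          calc (10/9) * r ^ (M+1) / ((M+1).factorial : ℝ)
              = ((10/9) * r ^ (M+1) / ((M+1).factorial : ℝ)) * 1 := by ring
            _ ≤ ((10/9) * r ^ (M+1) / ((M+1).factorial : ℝ))
                  * (Real.exp (α * z.re) * Real.exp r) := by
                apply mul_le_mul_of_nonneg_left h1 (by positivity)
            _ = Real.exp (α * z.re) * η := by rw [hηdef]; ring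
        have hexpand : Real.exp (α * z.re) * (1 - η)
            = Real.exp (α * z.re) - Real.exp (α * z.re) * η := by ring
        rw [hexpand]
        rw [habsexp] at htri
        linarith [hE, hcomp, htri]
      -- Step B
      have hKEY : (20/9) * Real.exp r * (50*P) ^ (M+1) / ((M+1).factorial : ℝ) ≤ 1 := by
        rw [div_le_one hfactpos]
        set u := (M:ℝ) + 1 with hudef
        have hu2 : (2:ℝ) ≤ u := by
          rw [hudef]
          have : (1:ℕ) ≤ M := hM1
          exact_mod_cast Nat.succ_le_succ this
        have hupos : (0:ℝ) < u := by linarith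
        have hfl : u ^ (M+1) ≤ Real.exp u * ((M+1).factorial : ℝ) := by
          have := my_fact_low (M+1)
          rw [hudef]
          push_cast at this ⊢
          exact this
        have he11 : Real.exp (11/10) ≤ 3.021 := by
          have h1 : Real.exp (11/10 : ℝ) = Real.exp 1 * Real.exp (1/10) := by
            rw [← Real.exp_add]; norm_num
          have hp : (0:ℝ) < Real.exp (1/10) := Real.exp_pos _
          have h2 : Real.exp (1/10 : ℝ) ≤ 1/(0.9 : ℝ) := by
            have h3 := Real.add_one_le_exp (-(1/10) : ℝ)
            rw [Real.exp_neg] at h3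
            rw [le_div_iff₀ (by norm_num : (0:ℝ) < 0.9)]
            have h4 := mul_le_mul_of_nonneg_left h3 (le_of_lt hp)
            rw [mul_inv_cancel₀ (ne_of_gt hp)] at h4
            nlinarith
          have h3 : Real.exp 1 < 2.7182818286 := Real.exp_one_lt_d9
          nlinarith [Real.exp_pos 1]
        have hq : (0:ℝ) ≤ Real.exp (11/10) / 10 := by positivity
        calc (20/9) * Real.exp r * (50*P) ^ (M+1)
            ≤ (20/9) * Real.exp (u/10) * (u/10) ^ (M+1) := by
              have e1 : Real.exp r ≤ Real.exp (u/10) := Real.exp_le_exp.mpr (by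
                rw [hudef]; linarith)
              have e2 : (50*P) ^ (M+1) ≤ (u/10) ^ (M+1) := by
                apply pow_le_pow_left₀ (by positivity)
                rw [hudef]; linarith
              have := mul_le_mul (mul_le_mul_of_nonneg_left e1 (by norm_num : (0:ℝ) ≤ 20/9))
                e2 (by positivity) (by positivity)
              exact this
          _ = (20/9) * Real.exp (u/10) * u ^ (M+1) / 10 ^ (M+1) := by
              rw [div_pow]; ring
          _ ≤ (20/9) * Real.exp (u/10) * (Real.exp u * ((M+1).factorial : ℝ)) / 10 ^ (M+1) := by
              gcongr
          _ = ((20/9) * (Real.exp (11/10) / 10) ^ (M+1)) * ((M+1).factorial : ℝ) := by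
              have e3 : Real.exp (u/10) * Real.exp u = (Real.exp (11/10)) ^ (M+1) := by
                rw [← Real.exp_add, ← Real.exp_nat_mul]
                congr 1
                rw [hudef]; push_cast; ring
              rw [div_pow, ← e3]
              field_simp
          _ ≤ ((20/9) * (Real.exp (11/10) / 10) ^ 2) * ((M+1).factorial : ℝ) := by
              apply mul_le_mul_of_nonneg_right _ (le_of_lt hfactpos)
              apply mul_le_mul_of_nonneg_left _ (by norm_num : (0:ℝ) ≤ 20/9)
              apply pow_le_pow_of_le_one hq
              · calc Real.exp (11/10) / 10 ≤ 3.021/10 := by linarith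
                  _ ≤ 1 := by norm_num
              · omega
          _ ≤ 1 * ((M+1).factorial : ℝ) := by
              apply mul_le_mul_of_nonneg_right _ (le_of_lt hfactpos)
              have : Real.exp (11/10) / 10 ≤ 0.3021 := by linarith
              nlinarith [Real.exp_pos (11/10 : ℝ)]
          _ = ((M+1).factorial : ℝ) := one_mul _
      have h2η : 2 * η ≤ (r / (50*P)) ^ (M+1) := by
        have hrρ : r ^ (M+1) = (50*P) ^ (M+1) * (r / (50*P)) ^ (M+1) := by
          rw [div_pow]
          field_simp
        have : 2 * η = ((20/9) * Real.exp r * (50*P) ^ (M+1) / ((M+1).factorial : ℝ))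
            * (r / (50*P)) ^ (M+1) := by
          rw [hηdef, hrρ]
          field_simp
          ring
        rw [this]
        calc ((20/9) * Real.exp r * (50*P) ^ (M+1) / ((M+1).factorial : ℝ))
              * (r / (50*P)) ^ (M+1)
            ≤ 1 * (r / (50*P)) ^ (M+1) :=
              mul_le_mul_of_nonneg_right hKEY (by positivity)
          _ = (r / (50*P)) ^ (M+1) := one_mul _
      -- Step C
      have hmM : 2 * m ≤ M + 1 := by
        have hu : (⌊50*P⌋₊ : ℝ) ≤ 50*P := Nat.floor_le (by positivity)
        have h10u : 10 * ⌊50*P⌋₊ ≤ M := by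
          rw [hM]
          apply Nat.le_floor
          push_cast
          linarith
        have hmB : m ≤ ⌊50*P⌋₊ + 1 := by
          rw [hm]
          exact Nat.ceil_le_floor_add_one _
        omega
      have hρM : (r / (50*P)) ^ (M+1) ≤ (r / (50*P)) ^ (2*m) :=
        pow_le_pow_of_le_one hρ0 (le_of_lt hρlt) hmM
      have hη12 : η ≤ 1/2 := by
        have h1 : (r / (50*P)) ^ (M+1) ≤ 1 := pow_le_one₀ hρ0 (le_of_lt hρlt)
        linarith
      -- final
      set c := 1 - η with hcdef
      have hc0 : (0:ℝ) ≤ c := by rw [hcdef]; linarith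
      have hlow : c ^ (2:ℕ)
          ≤ (‖N₁‖ ^ (2:ℕ)) ^ (k-1) * (‖N₂‖ ^ (2:ℕ)) ^ (2-k) := by
        have hN1 := hN (k-2) (abs_le.mpr ⟨by linarith, by linarith⟩)
        have hN2 := hN (k-1) (abs_le.mpr ⟨by linarith, by linarith⟩)
        have hsq1 : (Real.exp ((k-2) * z.re) * c) ^ (2:ℕ) ≤ ‖N₁‖ ^ (2:ℕ) := by
          apply pow_le_pow_left₀ (by positivity)
          rw [hN₁def]
          exact hN1
        have hsq2 : (Real.exp ((k-1) * z.re) * c) ^ (2:ℕ) ≤ ‖N₂‖ ^ (2:ℕ) := by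
          apply pow_le_pow_left₀ (by positivity)
          rw [hN₂def]
          exact hN2
        have hr1 : ((Real.exp ((k-2) * z.re) * c) ^ (2:ℕ)) ^ (k-1)
            ≤ (‖N₁‖ ^ (2:ℕ)) ^ (k-1) :=
          Real.rpow_le_rpow (by positivity) hsq1 hk1'
        have hr2 : ((Real.exp ((k-1) * z.re) * c) ^ (2:ℕ)) ^ (2-k)
            ≤ (‖N₂‖ ^ (2:ℕ)) ^ (2-k) :=
          Real.rpow_le_rpow (by positivity) hsq2 hk2'
        have hprodle : ((Real.exp ((k-2) * z.re) * c) ^ (2:ℕ)) ^ (k-1)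
              * ((Real.exp ((k-1) * z.re) * c) ^ (2:ℕ)) ^ (2-k)
            ≤ (‖N₁‖ ^ (2:ℕ)) ^ (k-1) * (‖N₂‖ ^ (2:ℕ)) ^ (2-k) :=
          mul_le_mul hr1 hr2 (Real.rpow_nonneg (by positivity) _)
            (Real.rpow_nonneg (by positivity) _)
        refine le_trans (le_of_eq ?_) hprodle
        have hcpos : (0:ℝ) < c := by rw [hcdef]; linarith
        have hcsqpos : (0:ℝ) < c ^ (2:ℕ) := by positivity
        have e1 : (Real.exp ((k-2) * z.re) * c) ^ (2:ℕ)
            = Real.exp (2*((k-2) * z.re)) * c ^ (2:ℕ) := by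
          rw [mul_pow, ← Real.exp_nat_mul]
          norm_num
        have e2 : (Real.exp ((k-1) * z.re) * c) ^ (2:ℕ)
            = Real.exp (2*((k-1) * z.re)) * c ^ (2:ℕ) := by
          rw [mul_pow, ← Real.exp_nat_mul]
          norm_num
        rw [e1, e2, Real.mul_rpow (le_of_lt (Real.exp_pos _)) (le_of_lt hcsqpos),
          Real.mul_rpow (le_of_lt (Real.exp_pos _)) (le_of_lt hcsqpos),
          ← Real.exp_mul, ← Real.exp_mul]
        have ecc : (c ^ (2:ℕ)) ^ (k-1) * (c ^ (2:ℕ)) ^ (2-k) = c ^ (2:ℕ) := by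
          rw [← Real.rpow_add hcsqpos, show k - 1 + (2 - k) = 1 by ring, Real.rpow_one]
        have eee : Real.exp (2 * ((k-2) * z.re) * (k-1))
            * Real.exp (2 * ((k-1) * z.re) * (2-k)) = 1 := by
          rw [← Real.exp_add,
            show 2*((k-2)*z.re)*(k-1) + 2*((k-1)*z.re)*(2-k) = 0 by ring, Real.exp_zero]
        calc c ^ (2:ℕ)
            = (Real.exp (2*((k-2)*z.re)*(k-1)) * Real.exp (2*((k-1)*z.re)*(2-k)))
              * ((c ^ (2:ℕ)) ^ (k-1) * (c ^ (2:ℕ)) ^ (2-k)) := by rw [eee, ecc, one_mul]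
          _ = _ := by ring
      have hF2 : 2 * η ≤ (r / (50*P)) ^ (2*m) := le_trans h2η hρM
      have hcsq : 1 - 2*η ≤ c ^ (2:ℕ) := by
        rw [hcdef]; nlinarith
      calc 1 - (r / (50 * P)) ^ (2 * m) ≤ 1 - 2*η := by linarith
        _ ≤ c ^ (2:ℕ) := hcsq
        _ ≤ _ := hlow

noncomputable def Qset (T : ℝ) (j : ℕ) : Finset ℕ :=
  (Finset.range ⌈Tseq T j⌉₊).filter (fun p => p.Prime ∧ InRange T j p)

lemma mem_Qset {T : ℝ} {j p : ℕ} : p ∈ Qset T j ↔ p.Prime ∧ InRange T j p := by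
  constructor
  · exact fun h => (Finset.mem_filter.mp h).2
  · intro h
    refine Finset.mem_filter.mpr ⟨Finset.mem_range.mpr ?_, h⟩
    have h1 : (p:ℝ) < Tseq T j := h.2.2
    have h2 : Tseq T j ≤ (⌈Tseq T j⌉₊ : ℝ) := Nat.le_ceil _
    exact_mod_cast lt_of_lt_of_le h1 h2

lemma Pv_nonneg (T : ℝ) (j : ℕ) : 0 ≤ Pv T j := by
  apply tsum_nonneg
  intro p
  split
  · positivity
  · exact le_refl 0

lemma Pcal_eq (T : ℝ) (j : ℕ) (s : ℂ) : Pcal T j s = ∑ p ∈ Qset T j, (p : ℂ) ^ (-s) := by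
  rw [Pcal, tsum_eq_sum (s := Qset T j) (fun p hp => if_neg (fun hc => hp (mem_Qset.mpr hc)))]
  exact Finset.sum_congr rfl fun p hp => if_pos (mem_Qset.mp hp)

lemma Pv_eq (T : ℝ) (j : ℕ) : Pv T j = ∑ p ∈ Qset T j, (1 : ℝ) / p := by
  rw [Pv, tsum_eq_sum (s := Qset T j) (fun p hp => if_neg (fun hc => hp (mem_Qset.mpr hc)))]
  exact Finset.sum_congr rfl fun p hp => if_pos (mem_Qset.mp hp)

/-- Omega of a product of prime powers -/
lemma Omega_prod_pow (Q : Finset ℕ) (hQ : ∀ p ∈ Q, p.Prime) (f : ℕ → ℕ) :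
    Omega (∏ p ∈ Q, p ^ f p) = ∑ p ∈ Q, f p := by
  classical
  induction Q using Finset.induction with
  | empty => simp [Omega]
  | @insert a Q' ha ih =>
    have hQ' : ∀ p ∈ Q', p.Prime := fun p hp => hQ p (Finset.mem_insert_of_mem hp)
    have hap : a.Prime := hQ a (Finset.mem_insert_self a Q')
    rw [Finset.prod_insert ha, Finset.sum_insert ha]
    have h1 : a ^ f a ≠ 0 := pow_ne_zero _ hap.pos.ne'
    have h2 : (∏ p ∈ Q', p ^ f p) ≠ 0 :=
      Finset.prod_ne_zero_iff.mpr fun p hp => pow_ne_zero _ (hQ' p hp).pos.ne'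
    have hΩ : ∀ n : ℕ, Omega n = ArithmeticFunction.cardFactors n := fun n => by
      rw [ArithmeticFunction.cardFactors_apply]; rfl
    rw [hΩ, ArithmeticFunction.cardFactors_mul h1 h2,
      ArithmeticFunction.cardFactors_apply_prime_pow hap, ← hΩ, ih hQ']

lemma factorization_Phi (Q : Finset ℕ) (hQ : ∀ p ∈ Q, p.Prime) (f : ℕ → ℕ) (q : ℕ) :
    (∏ p ∈ Q, p ^ f p).factorization q = if q ∈ Q then f q else 0 := by
  classical
  rw [Nat.factorization_prod (fun p hp => pow_ne_zero _ (hQ p hp).pos.ne')]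
  rw [Finset.sum_apply']
  have hterm : ∀ p ∈ Q, ((p ^ f p).factorization) q = if p = q then f p else 0 := by
    intro p hp
    rw [Nat.Prime.factorization_pow (hQ p hp)]
    exact Finsupp.single_apply
  rw [Finset.sum_congr rfl hterm]
  exact Finset.sum_ite_eq' Q q f

lemma gfun_Phi (Q : Finset ℕ) (hQ : ∀ p ∈ Q, p.Prime) (f : ℕ → ℕ)
    (hsupp : ∀ q, f q ≠ 0 → q ∈ Q) :
    gfun (∏ p ∈ Q, p ^ f p) = ∏ p ∈ Q, (1 : ℝ) / (f p).factorial := by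
  classical
  set n := ∏ p ∈ Q, p ^ f p with hn
  have hsub : n.primeFactors ⊆ Q := by
    intro q hq
    have h1 : n.factorization q ≠ 0 := by
      rw [← Nat.support_factorization] at hq
      exact Finsupp.mem_support_iff.mp hq
    rw [hn, factorization_Phi Q hQ f q] at h1
    by_contra hqQ
    rw [if_neg hqQ] at h1
    exact h1 rfl
  rw [gfun]
  rw [Finset.prod_subset hsub (fun q hq hqn => by
    have h1 : n.factorization q = 0 := by
      rw [← Nat.support_factorization] at hqn
      exact Finsupp.notMem_support_iff.mp hqn
    rw [h1]
    norm_num)]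
  apply Finset.prod_congr rfl
  intro p hp
  rw [hn, factorization_Phi Q hQ f p, if_pos hp]

lemma cpow_Phi (Q : Finset ℕ) (hQ : ∀ p ∈ Q, p.Prime) (f : ℕ → ℕ) (s : ℂ) :
    ((∏ p ∈ Q, p ^ f p : ℕ) : ℂ) ^ (-s) = ∏ p ∈ Q, ((p : ℂ) ^ (-s)) ^ f p := by
  classical
  have hppos : ∀ p ∈ Q, (0:ℝ) < (p:ℝ) := fun p hp => by exact_mod_cast (hQ p hp).pos
  have hne : (∏ p ∈ Q, p ^ f p : ℕ) ≠ 0 :=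
    Finset.prod_ne_zero_iff.mpr fun p hp => pow_ne_zero _ (hQ p hp).pos.ne'
  have hcne : ((∏ p ∈ Q, p ^ f p : ℕ) : ℂ) ≠ 0 := Nat.cast_ne_zero.mpr hne
  rw [Complex.cpow_def_of_ne_zero hcne]
  have hlog : Complex.log ((∏ p ∈ Q, p ^ f p : ℕ) : ℂ)
      = ∑ p ∈ Q, (f p : ℂ) * Complex.log (p : ℂ) := by
    have h1 : ((∏ p ∈ Q, p ^ f p : ℕ) : ℂ) = (((∏ p ∈ Q, p ^ f p : ℕ) : ℝ) : ℂ) := by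
      push_cast; ring
    rw [h1, ← Complex.ofReal_log (by positivity : (0:ℝ) ≤ ((∏ p ∈ Q, p ^ f p : ℕ) : ℝ))]
    have h2 : Real.log ((∏ p ∈ Q, p ^ f p : ℕ) : ℝ) = ∑ p ∈ Q, (f p : ℝ) * Real.log p := by
      rw [show ((∏ p ∈ Q, p ^ f p : ℕ) : ℝ) = ∏ p ∈ Q, (p:ℝ) ^ f p by push_cast; ring]
      rw [Real.log_prod (fun p hp => pow_ne_zero _ (ne_of_gt (hppos p hp)))]
      exact Finset.sum_congr rfl fun p hp => by rw [Real.log_pow]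
    rw [h2]
    push_cast
    exact Finset.sum_congr rfl fun p hp => by push_cast; ring
  rw [hlog, Finset.sum_mul, Complex.exp_sum]
  apply Finset.prod_congr rfl
  intro p hp
  have hpne : (p:ℂ) ≠ 0 := Nat.cast_ne_zero.mpr (hQ p hp).pos.ne'
  rw [Complex.cpow_def_of_ne_zero hpne]
  rw [show (f p : ℂ) * Complex.log p * (-s) = (f p : ℕ) * (Complex.log p * (-s)) by push_cast; ring]
  exact Complex.exp_nat_mul _ _

lemma multinom_id (Q : Finset ℕ) (u : ℕ → ℂ) (i : ℕ) :
    ∑ f ∈ Q.piAntidiag i, ∏ p ∈ Q, (u p) ^ (f p) / ((f p).factorial : ℂ)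
      = (∑ p ∈ Q, u p) ^ i / (i.factorial : ℂ) := by
  classical
  rw [Finset.sum_pow_eq_sum_piAntidiag, Finset.sum_div]
  apply Finset.sum_congr rfl
  intro f hf
  obtain ⟨hsum, hsupp⟩ := Finset.mem_piAntidiag.mp hf
  have hspec : (∏ p ∈ Q, (f p).factorial) * Nat.multinomial Q f = i.factorial := by
    rw [Nat.multinomial_spec, hsum]
  have hprodne : ((∏ p ∈ Q, (f p).factorial : ℕ) : ℂ) ≠ 0 := by
    exact_mod_cast Nat.cast_ne_zero.mpr (Finset.prod_ne_zero_iff.mpr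
      fun p _ => (Nat.factorial_pos _).ne')
  have hine : ((i.factorial : ℕ) : ℂ) ≠ 0 := Nat.cast_ne_zero.mpr (Nat.factorial_pos _).ne'
  have hcast : ((∏ p ∈ Q, (f p).factorial : ℕ) : ℂ) * (Nat.multinomial Q f : ℂ)
      = (i.factorial : ℂ) := by exact_mod_cast congrArg (Nat.cast : ℕ → ℂ) hspec
  have hmultne : (Nat.multinomial Q f : ℂ) ≠ 0 :=
    Nat.cast_ne_zero.mpr (Nat.multinomial_pos Q f).ne'
  have hpp : (∏ p ∈ Q, ((f p).factorial : ℂ)) = ((∏ p ∈ Q, (f p).factorial : ℕ) : ℂ) := by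
    push_cast; ring
  rw [Finset.prod_div_distrib, hpp, ← hcast,
    mul_comm (((∏ p ∈ Q, (f p).factorial : ℕ) : ℂ)) ((Nat.multinomial Q f : ℂ)),
    mul_div_mul_left _ _ hmultne]

lemma Ncal_eq (T : ℝ) (j : ℕ) (s : ℂ) (α : ℂ) :
    Ncal T j s α
      = ∑ i ∈ Finset.range (⌊500 * Pv T j⌋₊ + 1), (α * Pcal T j s) ^ i / (i.factorial : ℂ) := by
  classical
  set Q := Qset T j with hQdef
  have hQp : ∀ p ∈ Q, p.Prime := fun p hp => (mem_Qset.mp hp).1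
  set M := ⌊500 * Pv T j⌋₊ with hMdef
  set Φ : (ℕ → ℕ) → ℕ := fun f => ∏ p ∈ Q, p ^ f p with hΦdef
  have hPv0 : (0:ℝ) ≤ 500 * Pv T j := by linarith [Pv_nonneg T j]
  set S : Finset ℕ := (Finset.range (M+1)).biUnion (fun i => (Q.piAntidiag i).image Φ)
    with hSdef
  have hΩΦ : ∀ f : ℕ → ℕ, Omega (Φ f) = ∑ p ∈ Q, f p := fun f => Omega_prod_pow Q hQp f
  have hΦpos : ∀ f : ℕ → ℕ, 0 < Φ f :=
    fun f => Finset.prod_pos fun p hp => pow_pos (hQp p hp).pos _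
  have hcond_mem : ∀ n : ℕ,
      (1 ≤ n ∧ (∀ p : ℕ, p.Prime → p ∣ n → InRange T j p) ∧ (Omega n : ℝ) ≤ 500 * Pv T j)
      → n ∈ S := by
    intro n hc
    obtain ⟨h1, h2, h3⟩ := hc
    have hn0 : n ≠ 0 := by omega
    have hsubQ : n.primeFactors ⊆ Q := by
      intro q hq
      have hg := Nat.prime_of_mem_primeFactors hq
      have hd := Nat.dvd_of_mem_primeFactors hq
      exact mem_Qset.mpr ⟨hg, h2 q hg hd⟩
    have hΦf : Φ (fun p => n.factorization p) = n := by
      show ∏ p ∈ Q, p ^ n.factorization p = n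
      have hfac := Nat.factorization_prod_pow_eq_self hn0
      calc ∏ p ∈ Q, p ^ n.factorization p
          = ∏ p ∈ n.primeFactors, p ^ n.factorization p :=
            (Finset.prod_subset hsubQ (fun p _ hpn => by
              have h0 : n.factorization p = 0 := by
                rw [← Nat.support_factorization] at hpn
                exact Finsupp.notMem_support_iff.mp hpn
              rw [h0, pow_zero])).symm
        _ = n := by
            conv_rhs => rw [← hfac]
            rfl
    have hΩn : ∑ p ∈ Q, n.factorization p = Omega n := by
      rw [← hΩΦ (fun p => n.factorization p), hΦf]
    refine Finset.mem_biUnion.mpr ⟨Omega n, Finset.mem_range.mpr ?_,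
      Finset.mem_image.mpr ⟨(fun p => n.factorization p), ?_, hΦf⟩⟩
    · have hle : Omega n ≤ M := Nat.le_floor h3
      omega
    · rw [Finset.mem_piAntidiag]
      refine ⟨hΩn, fun q hq => ?_⟩
      apply hsubQ
      rw [← Nat.support_factorization]
      exact Finsupp.mem_support_iff.mpr hq
  have hNc : Ncal T j s α = ∑ n ∈ S,
      (if 1 ≤ n ∧ (∀ p : ℕ, p.Prime → p ∣ n → InRange T j p) ∧ (Omega n : ℝ) ≤ 500 * Pv T j
        then α ^ Omega n * (gfun n : ℂ) * (n : ℂ) ^ (-s) else 0) := by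
    rw [Ncal]
    exact tsum_eq_sum (fun n hn => if_neg (fun hc => hn (hcond_mem n hc)))
  have hΩΦi : ∀ i : ℕ, ∀ f ∈ Q.piAntidiag i, Omega (Φ f) = i := by
    intro i f hf
    obtain ⟨hsum, _⟩ := Finset.mem_piAntidiag.mp hf
    rw [hΩΦ f, hsum]
  have hdisj : (↑(Finset.range (M+1)) : Set ℕ).PairwiseDisjoint
      (fun i => (Q.piAntidiag i).image Φ) := by
    intro i _ i' _ hne
    apply Finset.disjoint_left.mpr
    intro n hn hn'
    obtain ⟨f, hf, hfn⟩ := Finset.mem_image.mp hn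
    obtain ⟨f', hf', hfn'⟩ := Finset.mem_image.mp hn'
    have e1 := hΩΦi i f hf
    have e2 := hΩΦi i' f' hf'
    exact hne (by rw [← e1, ← e2, hfn, hfn'])
  have hinj : ∀ i : ℕ, ∀ f ∈ Q.piAntidiag i, ∀ g ∈ Q.piAntidiag i, Φ f = Φ g → f = g := by
    intro i f hf g hg hfg
    obtain ⟨_, hsuppf⟩ := Finset.mem_piAntidiag.mp hf
    obtain ⟨_, hsuppg⟩ := Finset.mem_piAntidiag.mp hg
    funext q
    by_cases hq : q ∈ Q
    · have h1 := factorization_Phi Q hQp f q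
      have h2 := factorization_Phi Q hQp g q
      rw [if_pos hq] at h1 h2
      have h3 : (∏ p ∈ Q, p ^ f p).factorization q = (∏ p ∈ Q, p ^ g p).factorization q := by
        have h4 : Φ f = Φ g := hfg
        have h5 := congrArg (fun n : ℕ => n.factorization q) h4
        simpa [hΦdef] using h5
      omega
    · rcases Nat.eq_zero_or_pos (f q) with h | h
      · rcases Nat.eq_zero_or_pos (g q) with h' | h'
        · rw [h, h']
        · exact absurd (hsuppg q (by omega)) hq
      · exact absurd (hsuppf q (by omega)) hq
  have hterm : ∀ i ∈ Finset.range (M+1), ∀ f ∈ Q.piAntidiag i,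
      (if 1 ≤ Φ f ∧ (∀ p : ℕ, p.Prime → p ∣ Φ f → InRange T j p)
          ∧ (Omega (Φ f) : ℝ) ≤ 500 * Pv T j
        then α ^ Omega (Φ f) * (gfun (Φ f) : ℂ) * ((Φ f : ℕ) : ℂ) ^ (-s) else 0)
      = ∏ p ∈ Q, ((α * (p:ℂ) ^ (-s)) ^ f p / ((f p).factorial : ℂ)) := by
    intro i hi f hf
    obtain ⟨hsum, hsupp⟩ := Finset.mem_piAntidiag.mp hf
    have hΩi : Omega (Φ f) = i := hΩΦi i f hf
    have hiM : i ≤ M := by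
      have := Finset.mem_range.mp hi; omega
    have hc : 1 ≤ Φ f ∧ (∀ p : ℕ, p.Prime → p ∣ Φ f → InRange T j p)
        ∧ (Omega (Φ f) : ℝ) ≤ 500 * Pv T j := by
      refine ⟨hΦpos f, fun p hp hdvd => ?_, ?_⟩
      · have hfac : 0 < (∏ q ∈ Q, q ^ f q).factorization p :=
          Nat.Prime.factorization_pos_of_dvd hp (hΦpos f).ne' hdvd
        have h1 := factorization_Phi Q hQp f p
        by_cases hpQ : p ∈ Q
        · exact (mem_Qset.mp hpQ).2
        · rw [if_neg hpQ] at h1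
          omega
      · rw [hΩi]
        calc (i:ℝ) ≤ (M:ℝ) := by exact_mod_cast hiM
          _ ≤ 500 * Pv T j := by rw [hMdef]; exact Nat.floor_le hPv0
    rw [if_pos hc, hΩi]
    have hgf : gfun (Φ f) = ∏ p ∈ Q, (1 : ℝ) / (f p).factorial :=
      gfun_Phi Q hQp f (fun q hq => hsupp q hq)
    have hcp : ((Φ f : ℕ) : ℂ) ^ (-s) = ∏ p ∈ Q, ((p : ℂ) ^ (-s)) ^ f p :=
      cpow_Phi Q hQp f s
    rw [hgf, hcp, ← hsum, ← Finset.prod_pow_eq_pow_sum]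
    push_cast
    rw [← Finset.prod_mul_distrib, ← Finset.prod_mul_distrib]
    apply Finset.prod_congr rfl
    intro p hp
    rw [mul_pow]
    ring
  rw [hNc, Finset.sum_biUnion hdisj]
  apply Finset.sum_congr rfl
  intro i hi
  rw [Finset.sum_image (fun f hf g hg h => hinj i f hf g hg h)]
  rw [Finset.sum_congr rfl (hterm i hi)]
  rw [multinom_id Q (fun p => α * (p:ℂ) ^ (-s)) i]
  congr 1
  rw [Pcal_eq, Finset.mul_sum]

/-- pointwise interpolation inequality for `ζ`. -/
theorem stmt_4 (k : ℝ) (hk1 : 1 ≤ k) (hk2 : k ≤ 2) :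
    ∃ T₀ : ℝ, ∀ T : ℝ, T₀ ≤ T → ∀ L : ℕ, IsLargestIterLogIndex T L → ∀ t : ℝ,
      ‖riemannZeta (1 / 2 + Complex.I * t)‖ ^ (2 * k - 2) *
          ‖deriv riemannZeta (1 / 2 + Complex.I * t)‖ ^ (2 : ℕ) ≤
        2 * k * ‖riemannZeta (1 / 2 + Complex.I * t)‖ ^ (2 : ℕ) *
            ‖deriv riemannZeta (1 / 2 + Complex.I * t)‖ ^ (2 : ℕ) *
            ∏ j ∈ Finset.Icc 2 L,
              ‖Ncal T j (1 / 2 + Complex.I * t) ((k : ℂ) - 2)‖ ^ (2 : ℕ)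
        + (4 - 2 * k) * ‖deriv riemannZeta (1 / 2 + Complex.I * t)‖ ^ (2 : ℕ) *
            ∏ j ∈ Finset.Icc 2 L,
              ‖Ncal T j (1 / 2 + Complex.I * t) ((k : ℂ) - 1)‖ ^ (2 : ℕ)
        + ∑ v ∈ Finset.Icc 2 L,
            (2 * k * ‖riemannZeta (1 / 2 + Complex.I * t)‖ ^ (2 : ℕ) *
                ‖deriv riemannZeta (1 / 2 + Complex.I * t)‖ ^ (2 : ℕ) *
                ∏ j ∈ Finset.Ico 2 v,
                  ‖Ncal T j (1 / 2 + Complex.I * t) ((k : ℂ) - 2)‖ ^ (2 : ℕ)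
              + (4 - 2 * k) * ‖deriv riemannZeta (1 / 2 + Complex.I * t)‖ ^ (2 : ℕ) *
                ∏ j ∈ Finset.Ico 2 v,
                  ‖Ncal T j (1 / 2 + Complex.I * t) ((k : ℂ) - 1)‖ ^ (2 : ℕ)) *
              ‖Pcal T v (1 / 2 + Complex.I * t) / (50 * (Pv T v : ℂ))‖ ^
                (2 * ⌈50 * Pv T v⌉₊) := by
  refine ⟨0, fun T _ L _ t => ?_⟩
  set s : ℂ := 1 / 2 + Complex.I * (t : ℂ) with hs
  have hkey : ∀ j : ℕ, 2 ≤ j → j ≤ L →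
      1 - min (‖Pcal T j s / (50 * (Pv T j : ℂ))‖ ^ (2 * ⌈50 * Pv T j⌉₊)) 1 ≤
        (‖Ncal T j s ((k:ℂ) - 2)‖ ^ (2:ℕ)) ^ (k - 1) *
        (‖Ncal T j s ((k:ℂ) - 1)‖ ^ (2:ℕ)) ^ (2 - k) := by
    intro j _ _
    have hperj := my_perj (Pv T j) (Pv_nonneg T j) (Pcal T j s) k hk1 hk2
    have e1 : (((k - 2 : ℝ)) : ℂ) = ((k:ℂ) - 2) := by push_cast; ring
    have e2 : (((k - 1 : ℝ)) : ℂ) = ((k:ℂ) - 1) := by push_cast; ring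
    rw [e1, e2, ← Ncal_eq T j s ((k:ℂ) - 2), ← Ncal_eq T j s ((k:ℂ) - 1)] at hperj
    have eF : ‖Pcal T j s / (50 * (Pv T j : ℂ))‖
        = ‖Pcal T j s‖ / (50 * Pv T j) := by
      rw [norm_div]
      congr 1
      rw [show (50 * (Pv T j : ℂ)) = (((50 * Pv T j : ℝ)) : ℂ) by push_cast; ring,
        Complex.norm_real, Real.norm_eq_abs, abs_of_nonneg (by linarith [Pv_nonneg T j])]
    rw [eF]
    exact hperj
  have := my_assembly L (‖riemannZeta s‖) (‖deriv riemannZeta s‖)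
      (norm_nonneg _) (norm_nonneg _)
      (fun j => ‖Ncal T j s ((k:ℂ) - 2)‖ ^ (2:ℕ))
      (fun j => ‖Ncal T j s ((k:ℂ) - 1)‖ ^ (2:ℕ))
      (fun v => ‖Pcal T v s / (50 * (Pv T v : ℂ))‖ ^ (2 * ⌈50 * Pv T v⌉₊))
      (fun j => by positivity) (fun j => by positivity) (fun j => by positivity)
      k hk1 hk2 hkey
  exact this
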